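/- Define t(n) = ∑_{j=0}^{n} C(n,j)² C(n+j,j). Then t satisfies the recurrence (n+1)² t(n+1) = (11n²+11n+3) t(n) + n² t(n−1) for all n ≥ 1, with t(0)=1 and t(1)=3. -/

import Mathlib

open scoped BigOperators

/-- Apéry numbers (for ζ(2)): `t(n) = ∑_{j=0}^n C(n,j)² C(n+j,j)`. -/
def tseq (n : ℕ) : ℤ :=
  ∑ j ∈ Finset.range (n + 1), ((n.choose j : ℤ)) ^ 2 * ((n + j).choose j : ℤ)

/-- The summand. -/
def Fz (n k : ℕ) : ℤ := ((n.choose k : ℤ)) ^ 2 * ((n + k).choose k : ℤ)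

/-- Zeilberger certificate term. -/
def gz (n : ℕ) : ℕ → ℤ
  | 0 => 0
  | k + 1 => Fz n k *
      (((k : ℤ) + 1) ^ 2 + ((k : ℤ) + 1) * (1 + 6 * (n : ℤ)) -
        (11 * (n : ℤ) ^ 2 + 15 * (n : ℤ) + 4))

lemma ch1 (N k : ℕ) :
    ((N : ℤ) + 1 - k) * ((N + 1).choose k : ℤ) = ((N : ℤ) + 1) * (N.choose k : ℤ) := by
  rcases le_or_gt k (N + 1) with h | h
  · have h' := congrArg (Nat.cast : ℕ → ℤ) (Nat.choose_mul_succ_eq N k)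
    push_cast [Nat.cast_sub h] at h'
    linarith
  · rw [Nat.choose_eq_zero_of_lt h, Nat.choose_eq_zero_of_lt (by omega : N < k)]
    push_cast; ring

lemma ch2 (N k : ℕ) :
    ((k : ℤ) + 1) * (N.choose (k + 1) : ℤ) = ((N : ℤ) - k) * (N.choose k : ℤ) := by
  rcases le_or_gt k N with h | h
  · have h' := congrArg (Nat.cast : ℕ → ℤ) (Nat.choose_succ_right_eq N k)
    push_cast [Nat.cast_sub h] at h'
    linarith
  · rw [Nat.choose_eq_zero_of_lt h, Nat.choose_eq_zero_of_lt (by omega : N < k + 1)]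
    push_cast; ring

lemma key (m k : ℕ) :
    ((m : ℤ) + 2) ^ 2 * Fz (m + 2) k
      - (11 * ((m : ℤ) + 1) ^ 2 + 11 * ((m : ℤ) + 1) + 3) * Fz (m + 1) k
      - ((m : ℤ) + 1) ^ 2 * Fz m k
      = gz (m + 1) (k + 1) - gz (m + 1) k := by
  rcases k with _ | j
  · simp only [Fz, gz]
    norm_num
    ring
  rcases le_or_gt j m with hj | hj
  · -- main case: 1 ≤ k = j+1 ≤ m+1
    simp only [Fz, gz]
    push_cast
    rw [show m + 2 + (j + 1) = m + j + 3 by omega, show m + 1 + (j + 1) = m + j + 2 by omega,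
      show m + (j + 1) = m + j + 1 by omega, show m + 1 + j = m + j + 1 by omega]
    have h1 := ch1 (m + 1) (j + 1)
    rw [show m + 1 + 1 = m + 2 by omega] at h1
    push_cast at h1
    have h2 := ch1 m (j + 1)
    push_cast at h2
    have h3 := ch2 (m + 1) j
    push_cast at h3
    have h4 := ch1 (m + j + 2) (j + 1)
    rw [show m + j + 2 + 1 = m + j + 3 by omega] at h4
    push_cast at h4
    have h5 := ch1 (m + j + 1) (j + 1)
    rw [show m + j + 1 + 1 = m + j + 2 by omega] at h5
    push_cast at h5
    have h6n := Nat.add_one_mul_choose_eq (m + j + 1) j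
    rw [show m + j + 1 + 1 = m + j + 2 by omega] at h6n
    have h6 := congrArg (Nat.cast : ℕ → ℤ) h6n
    push_cast at h6
    set A1 := ((m + 2).choose (j + 1) : ℤ)
    set A2 := ((m + 1).choose (j + 1) : ℤ)
    set A3 := (m.choose (j + 1) : ℤ)
    set A4 := ((m + 1).choose j : ℤ)
    set B1 := ((m + j + 3).choose (j + 1) : ℤ)
    set B2 := ((m + j + 2).choose (j + 1) : ℤ)
    set B3 := ((m + j + 1).choose (j + 1) : ℤ)
    set B4 := ((m + j + 1).choose j : ℤ)
    have h1sq : (((m : ℤ) + 1 + 1 - (j + 1)) * A1) ^ 2 = (((m : ℤ) + 1 + 1) * A2) ^ 2 := by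
      rw [h1]
    have h2sq : (((m : ℤ) + 1 - (j + 1)) * A2) ^ 2 = (((m : ℤ) + 1) * A3) ^ 2 := by rw [h2]
    have h3sq : (((j : ℤ) + 1) * A2) ^ 2 = (((m : ℤ) + 1 - j) * A4) ^ 2 := by rw [h3]
    have e1 : ((m : ℤ) + 1 - j) ^ 2 * ((m : ℤ) + 2) * (A1 ^ 2 * B1)
        = ((m : ℤ) + 2) ^ 2 * ((m : ℤ) + (j : ℤ) + 3) * (A2 ^ 2 * B2) := by
      linear_combination (((m : ℤ) + 2) * B1) * h1sq + (((m : ℤ) + 2) ^ 2 * A2 ^ 2) * h4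
    have e2 : ((m : ℤ) + 1) ^ 2 * ((m : ℤ) + (j : ℤ) + 2) * (A3 ^ 2 * B3)
        = ((m : ℤ) + 1) * ((m : ℤ) - j) ^ 2 * (A2 ^ 2 * B2) := by
      linear_combination (-((m : ℤ) + (j : ℤ) + 2) * B3) * h2sq
        + (-((m : ℤ) - j) ^ 2 * A2 ^ 2) * h5
    have e3 : ((m : ℤ) + 1 - j) ^ 2 * ((m : ℤ) + (j : ℤ) + 2) * (A4 ^ 2 * B4)
        = ((j : ℤ) + 1) ^ 3 * (A2 ^ 2 * B2) := by
      linear_combination (-((m : ℤ) + (j : ℤ) + 2) * B4) * h3sq + (((j : ℤ) + 1) ^ 2 * A2 ^ 2) * h6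
    have h0 : (0 : ℤ) < (m : ℤ) + 1 - j := by omega
    have hM : (0 : ℤ) < ((m : ℤ) + 1 - j) ^ 2 * ((m : ℤ) + 2) ^ 3 * ((m : ℤ) + 1) ^ 3
        * ((m : ℤ) + (j : ℤ) + 2) := by
      apply mul_pos (mul_pos (mul_pos (pow_pos h0 2) (by positivity)) (by positivity))
      positivity
    apply mul_left_cancel₀ hM.ne'
    linear_combination
      (((m : ℤ) + 2) ^ 4 * ((m : ℤ) + 1) ^ 3 * ((m : ℤ) + (j : ℤ) + 2)) * e1
      + (-((m : ℤ) + 1 - j) ^ 2 * ((m : ℤ) + 2) ^ 3 * ((m : ℤ) + 1) ^ 3) * e2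
      + (((m : ℤ) + 2) ^ 3 * ((m : ℤ) + 1) ^ 3 *
          (((j : ℤ) + 1) ^ 2 + ((j : ℤ) + 1) * (1 + 6 * ((m : ℤ) + 1))
            - (11 * ((m : ℤ) + 1) ^ 2 + 15 * ((m : ℤ) + 1) + 4))) * e3
  rcases le_or_gt j (m + 1) with hj2 | hj2
  · -- case k = m+2 (j = m+1)
    have hjm : j = m + 1 := by omega
    subst hjm
    simp only [Fz, gz]
    rw [Nat.choose_eq_zero_of_lt (by omega : m + 1 < m + 1 + 1),
      Nat.choose_eq_zero_of_lt (by omega : m < m + 1 + 1),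
      Nat.choose_self (m + 2), Nat.choose_self (m + 1)]
    have hc := congrArg (Nat.cast : ℕ → ℤ) (Nat.succ_mul_centralBinom_succ (m + 1))
    rw [Nat.centralBinom, Nat.centralBinom] at hc
    rw [show 2 * (m + 1 + 1) = m + 2 + (m + 2) by omega,
      show 2 * (m + 1) = m + 1 + (m + 1) by omega] at hc
    push_cast at hc
    push_cast
    rw [show m + 1 + 1 = m + 2 by omega]
    linear_combination ((m : ℤ) + 2) * hc
  · -- case k ≥ m+3 : everything vanishes
    simp only [Fz, gz]
    rw [Nat.choose_eq_zero_of_lt (by omega : m + 2 < j + 1),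
      Nat.choose_eq_zero_of_lt (by omega : m + 1 < j + 1),
      Nat.choose_eq_zero_of_lt (by omega : m < j + 1),
      Nat.choose_eq_zero_of_lt (by omega : m + 1 < j)]
    push_cast
    ring

theorem stmt5 :
    tseq 0 = 1 ∧ tseq 1 = 3 ∧
      ∀ n : ℕ, 1 ≤ n →
        ((n : ℤ) + 1) ^ 2 * tseq (n + 1)
          = (11 * (n : ℤ) ^ 2 + 11 * n + 3) * tseq n + (n : ℤ) ^ 2 * tseq (n - 1) := by
  refine ⟨by norm_num [tseq], by norm_num [tseq, Finset.sum_range_succ], ?_⟩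
  intro n hn
  obtain ⟨m, rfl⟩ : ∃ m, n = m + 1 := ⟨n - 1, by omega⟩
  have hz1 : Fz (m + 1) (m + 2) = 0 := by
    simp [Fz, Nat.choose_eq_zero_of_lt (by omega : m + 1 < m + 2)]
  have hz2 : Fz m (m + 1) = 0 := by
    simp [Fz, Nat.choose_eq_zero_of_lt (by omega : m < m + 1)]
  have hz3 : Fz m (m + 2) = 0 := by
    simp [Fz, Nat.choose_eq_zero_of_lt (by omega : m < m + 2)]
  have hA : tseq (m + 2) = ∑ k ∈ Finset.range (m + 3), Fz (m + 2) k := rfl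
  have hB : tseq (m + 1) = ∑ k ∈ Finset.range (m + 3), Fz (m + 1) k := by
    rw [Finset.sum_range_succ, hz1, add_zero]; rfl
  have hC : tseq m = ∑ k ∈ Finset.range (m + 3), Fz m k := by
    rw [Finset.sum_range_succ, Finset.sum_range_succ, hz2, hz3, add_zero, add_zero]; rfl
  have htel : ∑ k ∈ Finset.range (m + 3), (gz (m + 1) (k + 1) - gz (m + 1) k)
      = gz (m + 1) (m + 3) - gz (m + 1) 0 := Finset.sum_range_sub _ _
  have hend : gz (m + 1) (m + 3) = 0 := by
    show Fz (m + 1) (m + 2) * _ = 0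
    rw [hz1, zero_mul]
  have expand : ((m : ℤ) + 2) ^ 2 * tseq (m + 2)
      - (11 * ((m : ℤ) + 1) ^ 2 + 11 * ((m : ℤ) + 1) + 3) * tseq (m + 1)
      - ((m : ℤ) + 1) ^ 2 * tseq m = 0 := by
    rw [hA, hB, hC, Finset.mul_sum, Finset.mul_sum, Finset.mul_sum,
      ← Finset.sum_sub_distrib, ← Finset.sum_sub_distrib]
    rw [Finset.sum_congr rfl fun k _ => key m k, htel, hend]
    simp [gz]
  show ((↑(m + 1) : ℤ) + 1) ^ 2 * tseq (m + 2)
      = (11 * (↑(m + 1) : ℤ) ^ 2 + 11 * ↑(m + 1) + 3) * tseq (m + 1)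
        + (↑(m + 1) : ℤ) ^ 2 * tseq m
  push_cast
  linarith [expand]
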